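/- The symmetry test statistic Rₙ^β admits the closed form Rₙ^β = (2/n²) Σᵢ Σⱼ { Bₙ(R_{i1}, R_{j1}) Bₙ(R_{i2}, R_{j2}) − Bₙ(R_{i1}, R_{j2}) Bₙ(R_{i2}, R_{j1}) }, where Bₙ(r,s) = ∫₀¹ F_{n,r}(u) F_{n,s}(u) du. -/

import Mathlib

open MeasureTheory intervalIntegral

/-- The CDF of the Beta(r, n+1−r) distribution:
`F_{n,r}(u) = (n!/((r−1)!(n−r)!)) ∫₀ᵘ t^{r−1}(1−t)^{n−r} dt`. -/
noncomputable def betaCDF (n r : ℕ) (u : ℝ) : ℝ :=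
  ((n.factorial : ℝ) / ((r - 1).factorial * (n - r).factorial)) *
    ∫ t in (0 : ℝ)..u, t ^ (r - 1) * (1 - t) ^ (n - r)

/-- The bivariate empirical beta copula. -/
noncomputable def empBetaCopula2 (n : ℕ) (R₁ R₂ : Fin n → ℕ) (u₁ u₂ : ℝ) : ℝ :=
  (1 / n) * ∑ i : Fin n, betaCDF n (R₁ i) u₁ * betaCDF n (R₂ i) u₂

/-- `Bₙ(r,s) = ∫₀¹ F_{n,r}(u) F_{n,s}(u) du`. -/
noncomputable def Bmat (n r s : ℕ) : ℝ :=
  ∫ u in (0 : ℝ)..1, betaCDF n r u * betaCDF n s u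

lemma betaCDF_continuous (n r : ℕ) : Continuous (betaCDF n r) := by
  unfold betaCDF
  exact continuous_const.mul (intervalIntegral.continuous_primitive
    (fun a b => (Continuous.intervalIntegrable (by fun_prop) a b)) 0)

lemma integral_comb4 (p q r s : ℝ → ℝ)
    (hp : IntervalIntegrable p volume 0 1) (hq : IntervalIntegrable q volume 0 1)
    (hr : IntervalIntegrable r volume 0 1) (hs : IntervalIntegrable s volume 0 1)
    (a b c d : ℝ) :
    ∫ u in (0:ℝ)..1, (a * p u - b * q u - c * r u + d * s u)
      = a * (∫ u in (0:ℝ)..1, p u) - b * (∫ u in (0:ℝ)..1, q u)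
        - c * (∫ u in (0:ℝ)..1, r u) + d * (∫ u in (0:ℝ)..1, s u) := by
  rw [intervalIntegral.integral_add (((hp.const_mul a).sub (hq.const_mul b)).sub
      (hr.const_mul c)) (hs.const_mul d),
    intervalIntegral.integral_sub ((hp.const_mul a).sub (hq.const_mul b)) (hr.const_mul c),
    intervalIntegral.integral_sub (hp.const_mul a) (hq.const_mul b),
    intervalIntegral.integral_const_mul, intervalIntegral.integral_const_mul,
    intervalIntegral.integral_const_mul, intervalIntegral.integral_const_mul]

lemma key (f₁ f₂ g₁ g₂ : ℝ → ℝ) (hf₁ : Continuous f₁) (hf₂ : Continuous f₂)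
    (hg₁ : Continuous g₁) (hg₂ : Continuous g₂) (a₁ b₁ a₂ b₂ : ℝ) :
    ∫ u in (0:ℝ)..1, (a₁ * g₁ u - f₁ u * b₁) * (a₂ * g₂ u - f₂ u * b₂)
      = a₁ * a₂ * (∫ u in (0:ℝ)..1, g₁ u * g₂ u)
        - a₁ * b₂ * (∫ u in (0:ℝ)..1, g₁ u * f₂ u)
        - b₁ * a₂ * (∫ u in (0:ℝ)..1, f₁ u * g₂ u)
        + b₁ * b₂ * (∫ u in (0:ℝ)..1, f₁ u * f₂ u) := by
  have h : ∀ u : ℝ, (a₁ * g₁ u - f₁ u * b₁) * (a₂ * g₂ u - f₂ u * b₂)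
      = (a₁ * a₂) * (g₁ u * g₂ u) - (a₁ * b₂) * (g₁ u * f₂ u)
        - (b₁ * a₂) * (f₁ u * g₂ u) + (b₁ * b₂) * (f₁ u * f₂ u) := fun u => by ring
  simp_rw [h]
  exact integral_comb4 _ _ _ _ ((hg₁.mul hg₂).intervalIntegrable 0 1)
    ((hg₁.mul hf₂).intervalIntegrable 0 1) ((hf₁.mul hg₂).intervalIntegrable 0 1)
    ((hf₁.mul hf₂).intervalIntegrable 0 1) _ _ _ _

/-- The symmetry test statistic
`Rₙ^β = ∫₀¹∫₀¹ [ℂₙ^β(u₁,u₂) − ℂₙ^β(u₂,u₁)]² du₁ du₂` admits the closed form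
`Rₙ^β = (2/n²) Σᵢ Σⱼ { Bₙ(R_{i1},R_{j1}) Bₙ(R_{i2},R_{j2}) − Bₙ(R_{i1},R_{j2}) Bₙ(R_{i2},R_{j1}) }`. -/
theorem symmetryStat_closed_form (n : ℕ) (hn : 1 ≤ n) (R₁ R₂ : Fin n → ℕ)
    (hmem₁ : ∀ i, R₁ i ∈ Finset.Icc 1 n) (hmem₂ : ∀ i, R₂ i ∈ Finset.Icc 1 n) :
    (∫ u₁ in (0 : ℝ)..1, ∫ u₂ in (0 : ℝ)..1,
        (empBetaCopula2 n R₁ R₂ u₁ u₂ - empBetaCopula2 n R₁ R₂ u₂ u₁) ^ 2)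
      = (2 / (n : ℝ) ^ 2) * ∑ i : Fin n, ∑ j : Fin n,
          (Bmat n (R₁ i) (R₁ j) * Bmat n (R₂ i) (R₂ j)
            - Bmat n (R₁ i) (R₂ j) * Bmat n (R₂ i) (R₁ j)) := by
  have hc : ∀ r : ℕ, Continuous (betaCDF n r) := betaCDF_continuous n
  -- expand the square into a double sum
  have step : ∀ u₁ u₂ : ℝ,
      (empBetaCopula2 n R₁ R₂ u₁ u₂ - empBetaCopula2 n R₁ R₂ u₂ u₁) ^ 2
        = ((1:ℝ)/n)^2 * ∑ i : Fin n, ∑ j : Fin n,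
            ((betaCDF n (R₁ i) u₁ * betaCDF n (R₂ i) u₂
                - betaCDF n (R₁ i) u₂ * betaCDF n (R₂ i) u₁)
              * (betaCDF n (R₁ j) u₁ * betaCDF n (R₂ j) u₂
                - betaCDF n (R₁ j) u₂ * betaCDF n (R₂ j) u₁)) := by
    intro u₁ u₂
    simp only [empBetaCopula2]
    rw [← mul_sub, mul_pow, ← Finset.sum_sub_distrib]
    congr 1
    rw [pow_two, Finset.sum_mul_sum]
  -- inner integral
  have inner : ∀ u₁ : ℝ,
      (∫ u₂ in (0:ℝ)..1,
          (empBetaCopula2 n R₁ R₂ u₁ u₂ - empBetaCopula2 n R₁ R₂ u₂ u₁) ^ 2)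
        = ((1:ℝ)/n)^2 * ∑ i : Fin n, ∑ j : Fin n,
            (betaCDF n (R₁ i) u₁ * betaCDF n (R₁ j) u₁ * Bmat n (R₂ i) (R₂ j)
              - betaCDF n (R₁ i) u₁ * betaCDF n (R₂ j) u₁ * Bmat n (R₂ i) (R₁ j)
              - betaCDF n (R₂ i) u₁ * betaCDF n (R₁ j) u₁ * Bmat n (R₁ i) (R₂ j)
              + betaCDF n (R₂ i) u₁ * betaCDF n (R₂ j) u₁ * Bmat n (R₁ i) (R₁ j)) := by
    intro u₁
    simp_rw [step u₁]
    rw [intervalIntegral.integral_const_mul]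
    congr 1
    have hcont : ∀ (a b : ℕ) (c d : ℝ),
        Continuous fun u : ℝ => c * betaCDF n a u - betaCDF n b u * d := fun a b c d =>
      (continuous_const.mul (hc a)).sub ((hc b).mul continuous_const)
    rw [intervalIntegral.integral_finset_sum (fun i _ =>
      (Continuous.intervalIntegrable
        (by exact continuous_finset_sum _ fun j _ => by fun_prop) 0 1))]
    refine Finset.sum_congr rfl fun i _ => ?_
    rw [intervalIntegral.integral_finset_sum (fun j _ =>
      (Continuous.intervalIntegrable (by fun_prop) 0 1))]
    refine Finset.sum_congr rfl fun j _ => ?_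
    simp only [Bmat]
    exact key (betaCDF n (R₁ i)) (betaCDF n (R₁ j)) (betaCDF n (R₂ i)) (betaCDF n (R₂ j))
      (hc _) (hc _) (hc _) (hc _) _ _ _ _
  -- outer integral
  simp_rw [inner]
  rw [intervalIntegral.integral_const_mul]
  have houter : (∫ u₁ in (0:ℝ)..1, ∑ i : Fin n, ∑ j : Fin n,
      (betaCDF n (R₁ i) u₁ * betaCDF n (R₁ j) u₁ * Bmat n (R₂ i) (R₂ j)
        - betaCDF n (R₁ i) u₁ * betaCDF n (R₂ j) u₁ * Bmat n (R₂ i) (R₁ j)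
        - betaCDF n (R₂ i) u₁ * betaCDF n (R₁ j) u₁ * Bmat n (R₁ i) (R₂ j)
        + betaCDF n (R₂ i) u₁ * betaCDF n (R₂ j) u₁ * Bmat n (R₁ i) (R₁ j)))
      = ∑ i : Fin n, ∑ j : Fin n,
          (Bmat n (R₂ i) (R₂ j) * Bmat n (R₁ i) (R₁ j)
            - Bmat n (R₂ i) (R₁ j) * Bmat n (R₁ i) (R₂ j)
            - Bmat n (R₁ i) (R₂ j) * Bmat n (R₂ i) (R₁ j)
            + Bmat n (R₁ i) (R₁ j) * Bmat n (R₂ i) (R₂ j)) := by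
    rw [intervalIntegral.integral_finset_sum (fun i _ =>
      (Continuous.intervalIntegrable (by
        exact continuous_finset_sum _ fun j _ => by fun_prop) 0 1))]
    refine Finset.sum_congr rfl fun i _ => ?_
    rw [intervalIntegral.integral_finset_sum (fun j _ =>
      (Continuous.intervalIntegrable (by fun_prop) 0 1))]
    refine Finset.sum_congr rfl fun j _ => ?_
    have h : ∀ u : ℝ,
        betaCDF n (R₁ i) u * betaCDF n (R₁ j) u * Bmat n (R₂ i) (R₂ j)
          - betaCDF n (R₁ i) u * betaCDF n (R₂ j) u * Bmat n (R₂ i) (R₁ j)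
          - betaCDF n (R₂ i) u * betaCDF n (R₁ j) u * Bmat n (R₁ i) (R₂ j)
          + betaCDF n (R₂ i) u * betaCDF n (R₂ j) u * Bmat n (R₁ i) (R₁ j)
        = Bmat n (R₂ i) (R₂ j) * (betaCDF n (R₁ i) u * betaCDF n (R₁ j) u)
          - Bmat n (R₂ i) (R₁ j) * (betaCDF n (R₁ i) u * betaCDF n (R₂ j) u)
          - Bmat n (R₁ i) (R₂ j) * (betaCDF n (R₂ i) u * betaCDF n (R₁ j) u)
          + Bmat n (R₁ i) (R₁ j) * (betaCDF n (R₂ i) u * betaCDF n (R₂ j) u) :=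
      fun u => by ring
    simp_rw [h]
    rw [integral_comb4 (fun u => betaCDF n (R₁ i) u * betaCDF n (R₁ j) u)
      (fun u => betaCDF n (R₁ i) u * betaCDF n (R₂ j) u)
      (fun u => betaCDF n (R₂ i) u * betaCDF n (R₁ j) u)
      (fun u => betaCDF n (R₂ i) u * betaCDF n (R₂ j) u)
      (((hc _).mul (hc _)).intervalIntegrable 0 1)
      (((hc _).mul (hc _)).intervalIntegrable 0 1)
      (((hc _).mul (hc _)).intervalIntegrable 0 1)
      (((hc _).mul (hc _)).intervalIntegrable 0 1)]
    simp only [Bmat]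
  rw [houter]
  rw [Finset.mul_sum, Finset.mul_sum]
  refine Finset.sum_congr rfl fun i _ => ?_
  rw [Finset.mul_sum, Finset.mul_sum]
  refine Finset.sum_congr rfl fun j _ => ?_
  ring
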